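/- arXiv:2209.04302 — 5 statements merged into one kernel-verified Lean document; each statement's English description precedes it below -/
import Mathlib

section
/- If P is a generator path for odd n, then the family {P_0, P_1, …, P_{n-1}} of all n rotations of P (where P_i is obtained by adding i to both endpoints of every edge of P, modulo n) is a separating path system for K_n. Consequently f(K_n) ≤ n. -/
open SimpleGraph Finset

/-- `A` separates edges `e` and `e'`: exactly one of them lies in `A`. -/
def EdgeSeparates {V : Type*} (A : Finset (Sym2 V)) (e e' : Sym2 V) : Prop :=
  (e ∈ A ∧ e' ∉ A) ∨ (e' ∈ A ∧ e ∉ A)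

/-- `P` is the edge set of a path in `G`. -/
def IsPathEdgeSet {V : Type*} [DecidableEq V] (G : SimpleGraph V) (P : Finset (Sym2 V)) : Prop :=
  ∃ (u v : V) (w : G.Walk u v), w.IsPath ∧ P = w.edges.toFinset

/-- A separating system of `G`: a family of edge subsets separating every pair of
distinct edges of `G`. -/
def IsSepSystem {V : Type*} (G : SimpleGraph V) (S : Finset (Finset (Sym2 V))) : Prop :=
  (∀ P ∈ S, ∀ e ∈ P, e ∈ G.edgeSet) ∧
  ∀ e ∈ G.edgeSet, ∀ e' ∈ G.edgeSet, e ≠ e' → ∃ P ∈ S, EdgeSeparates P e e'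

/-- A separating path system of `G`. -/
def IsSepPathSystem {V : Type*} [DecidableEq V] (G : SimpleGraph V)
    (S : Finset (Finset (Sym2 V))) : Prop :=
  (∀ P ∈ S, IsPathEdgeSet G P) ∧
  ∀ e ∈ G.edgeSet, ∀ e' ∈ G.edgeSet, e ≠ e' → ∃ P ∈ S, EdgeSeparates P e e'

/-- `f(G)`: minimum size of a separating path system of `G`. -/
noncomputable def sepPathNumber {V : Type*} [DecidableEq V] (G : SimpleGraph V) : ℕ :=
  sInf {k | ∃ S : Finset (Finset (Sym2 V)), IsSepPathSystem G S ∧ S.card = k}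

/-- Clockwise distance between two vertices of `ZMod n`. -/
def cdist (n : ℕ) (v u : ZMod n) : ℕ := min (v - u).val (u - v).val

/-- The type of an edge of `K_n` with vertex set `ZMod n`. -/
def edgeType (n : ℕ) : Sym2 (ZMod n) → ℕ :=
  Sym2.lift ⟨fun u v => cdist n u v, fun u v => min_comm _ _⟩

/-- Number of edges of type `x` in `E`. -/
def typeCount (n : ℕ) (E : Finset (Sym2 (ZMod n))) (x : ℕ) : ℕ :=
  (E.filter fun e => edgeType n e = x).card

/-- The rotation of an edge set by `i`. -/
def rotEdges (n : ℕ) (i : ZMod n) (E : Finset (Sym2 (ZMod n))) : Finset (Sym2 (ZMod n)) :=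
  E.image (Sym2.map (· + i))

/-- (GP1): at least one edge of each type. -/
def GP1 (n : ℕ) (E : Finset (Sym2 (ZMod n))) : Prop :=
  ∀ x : ℕ, 1 ≤ x → x ≤ (n - 1) / 2 → 1 ≤ typeCount n E x

/-- (GP2): at most one type appears exactly once, no type more than twice. -/
def GP2 (n : ℕ) (E : Finset (Sym2 (ZMod n))) : Prop :=
  (∀ x : ℕ, typeCount n E x ≤ 2) ∧ {x : ℕ | typeCount n E x = 1}.Subsingleton

/-- (GP3): clockwise distances between same-type pairs are distinct across types. -/
def GP3 (n : ℕ) (E : Finset (Sym2 (ZMod n))) : Prop :=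
  ∀ x y : ℕ, x ≠ y → ∀ v v' u u' : ZMod n,
    edgeType n s(v, v + (x : ZMod n)) = x →
    edgeType n s(u, u + (y : ZMod n)) = y →
    s(v, v + (x : ZMod n)) ∈ E → s(v', v' + (x : ZMod n)) ∈ E → v ≠ v' →
    s(u, u + (y : ZMod n)) ∈ E → s(u', u' + (y : ZMod n)) ∈ E → u ≠ u' →
    cdist n v v' ≠ cdist n u u'

/-- A generator path for odd `n`. -/
def IsGenPath (n : ℕ) (E : Finset (Sym2 (ZMod n))) : Prop :=
  IsPathEdgeSet (⊤ : SimpleGraph (ZMod n)) E ∧ GP1 n E ∧ GP2 n E ∧ GP3 n E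

/-! The rotation `P_i` contains the `x`-type edge starting at `w` iff `w - i` starts an `x`-type
edge of `P`. So if no rotation separates the `x`-type edge at `v` from the `y`-type edge at `u`,
the set `S_y` of starting vertices of `y`-type edges of `P` is the translate `S_x + (u - v)`.
If `x = y`, summing over this translate gives `|S_x| • (u - v) = 0`, and `|S_x| ∈ {1, 2}` is
prime to the odd `n`, so `u = v`. If `x ≠ y`, (GP2) forces `|S_x| = |S_y| = 2`, and a translation
preserves the clockwise distance of the two starting vertices, contradicting (GP3). -/

theorem not_edgeSeparates_iff {V : Type*} {A : Finset (Sym2 V)} {e e' : Sym2 V} :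
    ¬ EdgeSeparates A e e' ↔ (e ∈ A ↔ e' ∈ A) := by
  unfold EdgeSeparates
  tauto

theorem IsPathEdgeSet.image_map {V W : Type*} [DecidableEq V] [DecidableEq W]
    {G : SimpleGraph V} {G' : SimpleGraph W} (f : G ↪g G') {P : Finset (Sym2 V)}
    (hP : IsPathEdgeSet G P) : IsPathEdgeSet G' (P.image (Sym2.map f)) := by
  obtain ⟨u, v, w, hw, rfl⟩ := hP
  refine ⟨f u, f v, w.map f.toHom, hw.map f.injective, ?_⟩
  ext e
  simp [Walk.edges_map]

theorem Finset.card_nsmul_eq_zero_of_image_add_eq {G : Type*} [AddCommGroup G] [DecidableEq G]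
    {S : Finset G} {c : G} (h : S.image (· + c) = S) : #S • c = 0 := by
  have hsum : ∑ a ∈ S, (a + c) = ∑ a ∈ S, a := by
    conv_rhs => rw [← h]
    exact (sum_image (f := id) fun a _ b _ (hab : a + c = b + c) => add_right_cancel hab).symm
  rwa [sum_add_distrib, sum_const, add_eq_left] at hsum

theorem Finset.eq_zero_of_image_add_eq {G : Type*} [AddCommGroup G] [DecidableEq G]
    {S : Finset G} {c : G} (h : S.image (· + c) = S) (hS : (Nat.card G).Coprime #S) : c = 0 :=
  hS.nsmul_right_bijective.injective <| by
    simp only [card_nsmul_eq_zero_of_image_add_eq h, smul_zero]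

theorem sepPathNumber_le_card {V : Type*} [DecidableEq V] {G : SimpleGraph V}
    {S : Finset (Finset (Sym2 V))} (hS : IsSepPathSystem G S) : sepPathNumber G ≤ #S :=
  Nat.sInf_le ⟨S, hS, rfl⟩

section

variable {n : ℕ}

theorem cdist_add_right (a b c : ZMod n) : cdist n (a + c) (b + c) = cdist n a b := by
  simp only [cdist, add_sub_add_right_eq_sub]

theorem edgeType_mk_add [NeZero n] {x : ℕ} (hx : 2 * x ≤ n) (v : ZMod n) :
    edgeType n s(v, v + x) = x := by
  have hval : (x : ZMod n).val = x := ZMod.val_cast_of_lt (by have := NeZero.pos n; omega)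
  change min (v - (v + x)).val (v + x - v).val = x
  rw [sub_add_cancel_left, add_sub_cancel_left, ZMod.neg_val]
  split_ifs with h0
  · rw [h0, ZMod.val_zero] at hval
    omega
  · omega

theorem two_mul_edgeType_le [NeZero n] (e : Sym2 (ZMod n)) : 2 * edgeType n e ≤ n := by
  induction e with
  | _ a b =>
    change 2 * min (a - b).val (b - a).val ≤ n
    rw [← neg_sub, ZMod.neg_val]
    split_ifs <;> omega

theorem exists_eq_mk_add_edgeType [NeZero n] (e : Sym2 (ZMod n)) :
    ∃ v, e = s(v, v + (edgeType n e : ZMod n)) := by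
  induction e with
  | _ a b =>
    change ∃ v, s(a, b) = s(v, v + ((min (a - b).val (b - a).val : ℕ) : ZMod n))
    rcases min_choice (a - b).val (b - a).val with h | h <;> rw [h, ZMod.natCast_zmod_val]
    · exact ⟨b, by rw [add_sub_cancel, Sym2.eq_swap]⟩
    · exact ⟨a, by rw [add_sub_cancel]⟩

theorem eq_of_mk_add_eq {x : ℕ} (hx : 2 * x < n) {v v' : ZMod n}
    (h : s(v, v + x) = s(v', v' + x)) : v = v' := by
  rcases Sym2.eq_iff.mp h with ⟨hv, -⟩ | ⟨hv, hv'⟩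
  · exact hv
  · have h2x : ((2 * x : ℕ) : ZMod n) = 0 := by
      push_cast
      linear_combination hv' - hv
    obtain rfl : x = 0 := by
      have := Nat.eq_zero_of_dvd_of_lt ((ZMod.natCast_eq_zero_iff _ _).mp h2x) hx
      omega
    simpa using hv

theorem exists_eq_mk_add_of_not_isDiag (hodd : Odd n) {e : Sym2 (ZMod n)} (he : ¬ e.IsDiag) :
    ∃ (v : ZMod n) (x : ℕ), 1 ≤ x ∧ 2 * x < n ∧ e = s(v, v + (x : ZMod n)) := by
  have : NeZero n := ⟨hodd.pos.ne'⟩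
  obtain ⟨v, hv⟩ := exists_eq_mk_add_edgeType e
  refine ⟨v, edgeType n e, Nat.one_le_iff_ne_zero.mpr fun h0 => he ?_, ?_, hv⟩
  · rw [hv, h0, Nat.cast_zero, add_zero]
    exact Sym2.mk_isDiag_iff.mpr rfl
  · have := two_mul_edgeType_le e
    obtain ⟨m, rfl⟩ := hodd
    omega

theorem mk_add_mem_rotEdges_iff (E : Finset (Sym2 (ZMod n))) (i w c : ZMod n) :
    s(w, w + c) ∈ rotEdges n i E ↔ s(w - i, w - i + c) ∈ E := by
  have : s(w, w + c) = Sym2.map (· + i) s(w - i, w - i + c) := by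
    rw [Sym2.map_mk]
    congr 1 <;> ring
  rw [this]
  exact (Sym2.map.injective (add_left_injective i)).mem_finset_image

theorem IsPathEdgeSet.rotEdges {E : Finset (Sym2 (ZMod n))}
    (hE : IsPathEdgeSet (⊤ : SimpleGraph (ZMod n)) E) (i : ZMod n) :
    IsPathEdgeSet (⊤ : SimpleGraph (ZMod n)) (rotEdges n i E) :=
  hE.image_map (Embedding.completeGraph (Equiv.addRight i).toEmbedding)

def startSet (n : ℕ) [NeZero n] (E : Finset (Sym2 (ZMod n))) (x : ℕ) : Finset (ZMod n) :=
  {v | s(v, v + (x : ZMod n)) ∈ E}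

theorem mem_startSet [NeZero n] {E : Finset (Sym2 (ZMod n))} {x : ℕ} {v : ZMod n} :
    v ∈ startSet n E x ↔ s(v, v + (x : ZMod n)) ∈ E := by
  simp [startSet]

theorem card_startSet [NeZero n] {x : ℕ} (hx : 2 * x < n) (E : Finset (Sym2 (ZMod n))) :
    #(startSet n E x) = typeCount n E x := by
  refine card_bij (fun v _ => s(v, v + (x : ZMod n))) (fun v hv => ?_)
    (fun v _ v' _ => eq_of_mk_add_eq hx) (fun e he => ?_)
  · exact mem_filter.mpr ⟨mem_startSet.mp hv, edgeType_mk_add hx.le v⟩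
  · obtain ⟨he, hex⟩ := mem_filter.mp he
    obtain ⟨v, hv⟩ := exists_eq_mk_add_edgeType e
    rw [hex] at hv
    exact ⟨v, mem_startSet.mpr (hv ▸ he), hv.symm⟩

theorem card_startSet_eq_one_or_two [NeZero n] {E : Finset (Sym2 (ZMod n))} (h1 : GP1 n E)
    (h2 : GP2 n E) {x : ℕ} (hx0 : 1 ≤ x) (hx : 2 * x < n) :
    #(startSet n E x) = 1 ∨ #(startSet n E x) = 2 := by
  have := h1 x hx0 (by omega)
  have := h2.1 x
  rw [card_startSet hx]
  omega

theorem image_add_startSet_of_forall_not_separates [NeZero n] {E : Finset (Sym2 (ZMod n))}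
    {x y : ℕ} {v u : ZMod n}
    (h : ∀ i, ¬ EdgeSeparates (rotEdges n i E) s(v, v + (x : ZMod n)) s(u, u + (y : ZMod n))) :
    (startSet n E x).image (· + (u - v)) = startSet n E y := by
  ext b
  have hb := not_edgeSeparates_iff.mp (h (u - b))
  rw [mk_add_mem_rotEdges_iff, mk_add_mem_rotEdges_iff, sub_sub_cancel,
    show v - (u - b) = b - (u - v) by ring] at hb
  rw [mem_image, mem_startSet, ← hb, ← mem_startSet]
  constructor
  · rintro ⟨a, ha, rfl⟩
    simpa using ha
  · exact fun hb => ⟨_, hb, sub_add_cancel _ _⟩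

theorem GP3.image_add_startSet_ne [NeZero n] {E : Finset (Sym2 (ZMod n))} (h : GP3 n E)
    {x y : ℕ} (hxy : x ≠ y) (hx : 2 * x ≤ n) (hy : 2 * y ≤ n) (hcard : #(startSet n E x) = 2)
    (c : ZMod n) : (startSet n E x).image (· + c) ≠ startSet n E y := by
  intro htrans
  obtain ⟨a, b, hab, hS⟩ := card_eq_two.mp hcard
  have hmem : ∀ z ∈ ({a, b} : Finset (ZMod n)),
      s(z, z + (x : ZMod n)) ∈ E ∧ s(z + c, z + c + (y : ZMod n)) ∈ E := fun z hz =>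
    ⟨mem_startSet.mp (hS ▸ hz), mem_startSet.mp (htrans ▸ mem_image_of_mem _ (hS ▸ hz))⟩
  obtain ⟨haE, hacE⟩ := hmem a (by simp)
  obtain ⟨hbE, hbcE⟩ := hmem b (by simp)
  exact h x y hxy a b (a + c) (b + c) (edgeType_mk_add hx a) (edgeType_mk_add hy _) haE hbE hab
    hacE hbcE (by simpa using hab) (cdist_add_right a b c).symm

theorem exists_rotEdges_separates (hodd : Odd n) {E : Finset (Sym2 (ZMod n))} (h1 : GP1 n E)
    (h2 : GP2 n E) (h3 : GP3 n E) {x y : ℕ} (hx0 : 1 ≤ x) (hx : 2 * x < n) (hy0 : 1 ≤ y)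
    (hy : 2 * y < n) {v u : ZMod n} (hne : s(v, v + (x : ZMod n)) ≠ s(u, u + (y : ZMod n))) :
    ∃ i, EdgeSeparates (rotEdges n i E) s(v, v + (x : ZMod n)) s(u, u + (y : ZMod n)) := by
  have : NeZero n := ⟨hodd.pos.ne'⟩
  by_contra! hsep
  have htrans := image_add_startSet_of_forall_not_separates hsep
  obtain rfl | hxy := eq_or_ne x y
  · have hcop : (Nat.card (ZMod n)).Coprime #(startSet n E x) := by
      rw [Nat.card_zmod]
      rcases card_startSet_eq_one_or_two h1 h2 hx0 hx with h | h <;> rw [h]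
      exacts [Nat.coprime_one_right n, Nat.coprime_two_right.mpr hodd]
    exact hne (by rw [sub_eq_zero.mp (eq_zero_of_image_add_eq htrans hcop)])
  · rcases card_startSet_eq_one_or_two h1 h2 hx0 hx with h | h
    · have hcard : #(startSet n E y) = 1 := by
        rw [← htrans, card_image_of_injective _ (add_left_injective _), h]
      exact hxy (h2.2 (show typeCount n E x = 1 by rwa [← card_startSet hx])
        (show typeCount n E y = 1 by rwa [← card_startSet hy]))
    · exact h3.image_add_startSet_ne hxy hx.le hy.le h _ htrans

theorem isSepPathSystem_rotEdges (hodd : Odd n) {E : Finset (Sym2 (ZMod n))}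
    (hE : IsGenPath n E) :
    IsSepPathSystem (⊤ : SimpleGraph (ZMod n))
      ((range n).image fun i : ℕ => rotEdges n (i : ZMod n) E) := by
  have : NeZero n := ⟨hodd.pos.ne'⟩
  obtain ⟨hpath, h1, h2, h3⟩ := hE
  refine ⟨?_, fun e he e' he' hne => ?_⟩
  · simp only [mem_image]
    rintro _ ⟨i, -, rfl⟩
    exact hpath.rotEdges _
  · obtain ⟨v, x, hx0, hx, rfl⟩ := exists_eq_mk_add_of_not_isDiag hodd (by simpa using he)
    obtain ⟨u, y, hy0, hy, rfl⟩ := exists_eq_mk_add_of_not_isDiag hodd (by simpa using he')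
    obtain ⟨i, hi⟩ := exists_rotEdges_separates hodd h1 h2 h3 hx0 hx hy0 hy hne
    exact ⟨_, mem_image.mpr ⟨i.val, mem_range.mpr i.val_lt, by rw [ZMod.natCast_zmod_val]⟩, hi⟩

end

theorem stmt5_general (n : ℕ) (hodd : Odd n) (E : Finset (Sym2 (ZMod n)))
    (hE : IsGenPath n E) :
    IsSepPathSystem (⊤ : SimpleGraph (ZMod n))
      ((Finset.range n).image fun i : ℕ => rotEdges n (i : ZMod n) E) ∧
    sepPathNumber (⊤ : SimpleGraph (ZMod n)) ≤ n := by
  have hsep := isSepPathSystem_rotEdges hodd hE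
  exact ⟨hsep, (sepPathNumber_le_card hsep).trans (card_image_le.trans (card_range n).le)⟩

/-- The `n` rotations of a generator path form a separating path system of `K_n`;
hence `f(K_n) ≤ n`. -/
theorem stmt5 (n : ℕ) (hodd : Odd n) (hn : 3 ≤ n) (E : Finset (Sym2 (ZMod n)))
    (hE : IsGenPath n E) :
    IsSepPathSystem (⊤ : SimpleGraph (ZMod n))
      ((Finset.range n).image fun i : ℕ => rotEdges n (i : ZMod n) E) ∧
    sepPathNumber (⊤ : SimpleGraph (ZMod n)) ≤ n :=
  stmt5_general n hodd E hE
end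

section
/- Let p be an odd prime, g a primitive root modulo p, and k = (p-1)/2. Then for any j, m ∈ [k] with j ≠ m, we have (g^{k+j+1} - g^j)/(g-1) ≢ ±(g^{k+m+1} - g^m)/(g-1) (mod p). -/
open SimpleGraph Finset

/-! Since `g ^ k = -1`, the numerator `g ^ (k + i + 1) - g ^ i` equals `-g ^ i (g + 1)`, and
`g ± 1 ≠ 0` because `g` has order `2k > 2`. The claim thus reduces to `g ^ j ≠ g ^ m` and
`g ^ j ≠ -g ^ m = g ^ (k + m)`, which hold as `j`, `m`, `k + m` are distinct residues mod `2k`. -/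

theorem pow_add_add_one_sub_pow {R : Type*} [CommRing R] {ζ : R} {k : ℕ} (h : ζ ^ k = -1)
    (i : ℕ) : ζ ^ (k + i + 1) - ζ ^ i = -(ζ ^ i * (ζ + 1)) := by
  rw [pow_succ, pow_add, h]
  ring

namespace IsPrimitiveRoot

section CommRing

variable {R : Type*} [CommRing R] {ζ : R} {k : ℕ}

theorem ne_neg_one {n : ℕ} (h : IsPrimitiveRoot ζ n) (hn : 2 < n) : ζ ≠ -1 := by
  rintro rfl
  have := Nat.le_of_dvd two_pos (h.dvd_of_pow_eq_one 2 (by ring))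
  omega

theorem pow_eq_neg_one_of_two_mul [IsDomain R] (h : IsPrimitiveRoot ζ (2 * k)) (hk : k ≠ 0) :
    ζ ^ k = -1 := by
  have h2 := h.pow_of_dvd hk (dvd_mul_left k 2)
  rw [Nat.mul_div_cancel _ (Nat.pos_of_ne_zero hk)] at h2
  exact h2.eq_neg_one_of_two_right

theorem pow_ne_pow_of_mem_Icc (h : IsPrimitiveRoot ζ (2 * k)) {j m : ℕ}
    (hj : j ∈ Icc 1 k) (hm : m ∈ Icc 1 k) (hjm : j ≠ m) : ζ ^ j ≠ ζ ^ m := by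
  rw [mem_Icc] at hj hm
  exact fun H ↦ hjm (h.pow_inj (by omega) (by omega) H)

/-- `-ζ ^ m = ζ ^ (k + m)`, and the exponents `j` and `k + m` are distinct in `[1, 2k]`. -/
theorem pow_ne_neg_pow_of_mem_Icc [IsDomain R] (h : IsPrimitiveRoot ζ (2 * k)) {j m : ℕ}
    (hj : j ∈ Icc 1 k) (hm : m ∈ Icc 1 k) : ζ ^ j ≠ -ζ ^ m := by
  rw [mem_Icc] at hj hm
  intro H
  have hshift : ζ ^ (j - 1) * ζ = ζ ^ (m - 1 + k) * ζ := by
    rw [← pow_succ, Nat.sub_add_cancel hj.1, H, pow_add, h.pow_eq_neg_one_of_two_mul (by omega),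
      mul_right_comm, ← pow_succ, Nat.sub_add_cancel hm.1]
    ring
  have := h.pow_inj (by omega) (by omega) (mul_right_cancel₀ (h.ne_zero (by omega)) hshift)
  omega

end CommRing

theorem div_sub_one_ne_and_ne_neg {K : Type*} [Field K] {ζ : K} {k : ℕ}
    (h : IsPrimitiveRoot ζ (2 * k)) {j m : ℕ} (hj : j ∈ Icc 1 k) (hm : m ∈ Icc 1 k)
    (hjm : j ≠ m) :
    (ζ ^ (k + j + 1) - ζ ^ j) / (ζ - 1) ≠ (ζ ^ (k + m + 1) - ζ ^ m) / (ζ - 1) ∧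
      (ζ ^ (k + j + 1) - ζ ^ j) / (ζ - 1) ≠ -((ζ ^ (k + m + 1) - ζ ^ m) / (ζ - 1)) := by
  have hk : 2 ≤ k := by rw [mem_Icc] at hj hm; omega
  have hsub : ζ - 1 ≠ 0 := sub_ne_zero.mpr (h.ne_one (by omega))
  have hadd : ζ + 1 ≠ 0 := by
    rw [← sub_neg_eq_add]; exact sub_ne_zero.mpr (h.ne_neg_one (by omega))
  have hneg := h.pow_eq_neg_one_of_two_mul (by omega)
  simp only [pow_add_add_one_sub_pow hneg, ← neg_div, ne_eq, div_left_inj' hsub,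
    neg_neg, mul_left_inj' hadd, ← neg_mul, neg_eq_iff_eq_neg]
  exact ⟨h.pow_ne_pow_of_mem_Icc hj hm hjm, h.pow_ne_neg_pow_of_mem_Icc hj hm⟩

end IsPrimitiveRoot

/-- For `j ≠ m` in `[k]`, `k = (p-1)/2`, the quantities
`(g^{k+j+1} - g^j)/(g-1)` are distinct and not negatives of each other mod `p`. -/
theorem stmt7 (p : ℕ) [Fact p.Prime] (hodd : Odd p) (g : ZMod p)
    (hg : orderOf g = p - 1) (j m : ℕ)
    (hj : j ∈ Finset.Icc 1 ((p - 1) / 2)) (hm : m ∈ Finset.Icc 1 ((p - 1) / 2))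
    (hjm : j ≠ m) :
    (g ^ ((p - 1) / 2 + j + 1) - g ^ j) / (g - 1) ≠
      (g ^ ((p - 1) / 2 + m + 1) - g ^ m) / (g - 1) ∧
    (g ^ ((p - 1) / 2 + j + 1) - g ^ j) / (g - 1) ≠
      -((g ^ ((p - 1) / 2 + m + 1) - g ^ m) / (g - 1)) := by
  have hp : p - 1 = 2 * ((p - 1) / 2) := by obtain ⟨t, rfl⟩ := hodd; omega
  have hprim : IsPrimitiveRoot g (2 * ((p - 1) / 2)) := hp ▸ hg ▸ IsPrimitiveRoot.orderOf g
  exact hprim.div_sub_one_ne_and_ne_neg hj hm hjm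
end

section
/- For all n ≥ 2 and each edge type x with 1 ≤ x ≤ ⌊n/2⌋, there exist two paths Q_x and Q_x' in K_n such that every x-type edge of K_n lies in Q_x ∪ Q_x', and every edge of Q_x ∪ Q_x' has type 1 or type x. -/
open SimpleGraph Finset

/-!
The `x`-type edges form `d = gcd(n, x)` cycles of length `m = n / d`. Start the `j`-th cycle at
`c_j = j(1 - x)`, so that its vertices are `c_j + kx` (`k < m`) and `c_{j+1} = c_j + (m - 1)x + 1`:
the last vertex of each cycle is joined to the first vertex of the next by an edge of type `1`.
The path `Q` runs through every cycle except its closing edge `{c_j + (m - 1)x, c_j}` and moves on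
to the next cycle along these type-`1` edges; the path `Q'` alternates the closing edges with the
same type-`1` edges.
-/

lemma SimpleGraph.exists_walk_of_adj {V : Type*} {G : SimpleGraph V} (g : ℕ → V) :
    ∀ N, (∀ i < N, G.Adj (g i) (g (i + 1))) →
      ∃ w : G.Walk (g 0) (g N), w.support = (List.range (N + 1)).map g ∧
        w.edges = (List.range N).map fun i => s(g i, g (i + 1))
  | 0, _ => ⟨.nil, by simp, by simp⟩
  | N + 1, hadj => by
    obtain ⟨w, hs, he⟩ := exists_walk_of_adj g N fun i hi => hadj i (by omega)
    exact ⟨w.concat (hadj N (by omega)), by simp [hs, List.range_succ],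
      by simp [he, List.range_succ]⟩

section SeqEdges

variable {V : Type*} [DecidableEq V]

def seqEdges (g : ℕ → V) (N : ℕ) : Finset (Sym2 V) :=
  ((List.range N).map fun i => s(g i, g (i + 1))).toFinset

lemma mem_seqEdges {g : ℕ → V} {N : ℕ} {e : Sym2 V} :
    e ∈ seqEdges g N ↔ ∃ i < N, s(g i, g (i + 1)) = e := by
  simp [seqEdges]

lemma isPathEdgeSet_seqEdges {g : ℕ → V} {N : ℕ} (hg : Set.InjOn g (Set.Iic N)) :
    IsPathEdgeSet ⊤ (seqEdges g N) := by
  have hmem {i : ℕ} (hi : i ∈ List.range (N + 1)) : i ∈ Set.Iic N :=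
    Nat.lt_succ_iff.1 (List.mem_range.1 hi)
  obtain ⟨w, hs, he⟩ := exists_walk_of_adj (G := ⊤) g N fun i hi =>
    (top_adj _ _).2 fun h => i.succ_ne_self (hg (Set.mem_Iic.2 hi.le) (Set.mem_Iic.2 hi) h).symm
  refine ⟨_, _, w, .mk' ?_, by rw [seqEdges, he]⟩
  rw [hs]
  exact List.nodup_range.map_on fun a ha b hb h => hg (hmem ha) (hmem hb) h

end SeqEdges

section EdgeType

variable {n : ℕ} [NeZero n]

lemma edgeType_mk_add_natCast (v : ZMod n) {y : ℕ} (hy : 2 * y ≤ n) :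
    edgeType n s(v, v + y) = y := by
  have hval : (y : ZMod n).val = y := ZMod.val_cast_of_lt (by have := NeZero.pos n; omega)
  simp only [edgeType, cdist, Sym2.lift_mk, sub_add_cancel_left, add_sub_cancel_left,
    ZMod.neg_val, hval]
  split_ifs with h0
  · rw [h0, ZMod.val_zero] at hval; omega
  · omega

lemma exists_eq_mk_add_of_edgeType_eq {e : Sym2 (ZMod n)} {y : ℕ} (hy : y < n)
    (he : edgeType n e = y) : ∃ v : ZMod n, e = s(v, v + y) := by
  induction e using Sym2.ind with
  | _ a b =>
    have hval : (y : ZMod n).val = y := ZMod.val_cast_of_lt hy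
    simp only [edgeType, cdist, Sym2.lift_mk] at he
    rcases le_total (a - b).val (b - a).val with h | h
    · rw [min_eq_left h, ← hval] at he
      exact ⟨b, by rw [← ZMod.val_injective n he, add_sub_cancel, Sym2.eq_swap]⟩
    · rw [min_eq_right h, ← hval] at he
      exact ⟨a, by rw [← ZMod.val_injective n he, add_sub_cancel]⟩

end EdgeType

section Cycles

variable {n x : ℕ}

def cycleVertex (n x j k : ℕ) : ZMod n := j * (1 - x) + k * x

lemma cycleVertex_succ_right (j k : ℕ) : cycleVertex n x j (k + 1) = cycleVertex n x j k + x := by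
  simp only [cycleVertex]; push_cast; ring

lemma two_le_div_gcd (hx1 : 1 ≤ x) (hx2 : 2 * x ≤ n) : 2 ≤ n / n.gcd x := by
  have hle : n.gcd x ≤ x := Nat.le_of_dvd hx1 (Nat.gcd_dvd_right n x)
  rw [Nat.le_div_iff_mul_le (Nat.gcd_pos_of_pos_right n hx1)]
  omega

variable [NeZero n]

lemma div_gcd_pos : 0 < n / n.gcd x :=
  Nat.div_pos (Nat.gcd_le_left x (NeZero.pos n)) (Nat.gcd_pos_of_pos_left x (NeZero.pos n))

lemma natCast_div_gcd_mul_self : ((n / n.gcd x : ℕ) : ZMod n) * x = 0 := by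
  rw [← ZMod.addOrderOf_coe x (NeZero.ne n), ← nsmul_eq_mul, addOrderOf_nsmul_eq_zero]

lemma cycleVertex_zero_right {k : ℕ} (hk : k + 1 = n / n.gcd x) (j : ℕ) :
    cycleVertex n x j 0 = cycleVertex n x j k + x := by
  have h := natCast_div_gcd_mul_self (n := n) (x := x)
  rw [← hk] at h
  simp only [cycleVertex]; push_cast at h ⊢; linear_combination -h

lemma cycleVertex_succ_zero {k : ℕ} (hk : k + 1 = n / n.gcd x) (j : ℕ) :
    cycleVertex n x (j + 1) 0 = cycleVertex n x j k + 1 := by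
  have h := natCast_div_gcd_mul_self (n := n) (x := x)
  rw [← hk] at h
  simp only [cycleVertex]; push_cast at h ⊢; linear_combination -h

-- Reducing mod `gcd n x` kills `x` and recovers `j`; then `k` is determined below the order of `x`.
lemma eq_and_eq_of_cycleVertex_eq {j j' k k' : ℕ} (hj : j < n.gcd x) (hj' : j' < n.gcd x)
    (hk : k < n / n.gcd x) (hk' : k' < n / n.gcd x)
    (h : cycleVertex n x j k = cycleVertex n x j' k') : j = j' ∧ k = k' := by
  have hx : (x : ZMod (n.gcd x)) = 0 := (ZMod.natCast_eq_zero_iff _ _).2 (Nat.gcd_dvd_right n x)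
  have hjj : j = j' := by
    have h' := congrArg (ZMod.castHom (Nat.gcd_dvd_left n x) (ZMod (n.gcd x))) h
    simp only [cycleVertex, map_add, map_mul, map_sub, map_one, map_natCast, hx, sub_zero,
      mul_one, mul_zero, add_zero, ZMod.natCast_eq_natCast_iff'] at h'
    rwa [Nat.mod_eq_of_lt hj, Nat.mod_eq_of_lt hj'] at h'
  subst hjj
  refine ⟨rfl, nsmul_injOn_Iio_addOrderOf (x := (x : ZMod n)) ?_ ?_ ?_⟩
  · rwa [Set.mem_Iio, ZMod.addOrderOf_coe x (NeZero.ne n)]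
  · rwa [Set.mem_Iio, ZMod.addOrderOf_coe x (NeZero.ne n)]
  · simpa only [nsmul_eq_mul, cycleVertex, add_right_inj] using h

lemma exists_cycleVertex_eq (v : ZMod n) :
    ∃ j < n.gcd x, ∃ k < n / n.gcd x, cycleVertex n x j k = v := by
  have hbij : Function.Bijective fun p : Fin (n.gcd x) × Fin (n / n.gcd x) =>
      cycleVertex n x p.1 p.2 := by
    refine (Fintype.bijective_iff_injective_and_card _).2 ⟨fun p q h => ?_, ?_⟩
    · obtain ⟨h1, h2⟩ := eq_and_eq_of_cycleVertex_eq p.1.2 q.1.2 p.2.2 q.2.2 h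
      exact Prod.ext (Fin.ext h1) (Fin.ext h2)
    · simp [ZMod.card, Nat.mul_div_cancel' (Nat.gcd_dvd_left n x)]
  obtain ⟨⟨j, k⟩, h⟩ := hbij.2 v
  exact ⟨j, j.2, k, k.2, h⟩

end Cycles

section TwoPaths

variable {n x : ℕ}

def cyclePathSeq (n x i : ℕ) : ZMod n :=
  cycleVertex n x (i / (n / n.gcd x)) (i % (n / n.gcd x))

def closingPathSeq (n x i : ℕ) : ZMod n :=
  cycleVertex n x (i / 2) ((n / n.gcd x - 1) * (i % 2))

lemma closingPathSeq_two_mul (j : ℕ) : closingPathSeq n x (2 * j) = cycleVertex n x j 0 := by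
  simp [closingPathSeq]

lemma closingPathSeq_two_mul_add_one (j : ℕ) :
    closingPathSeq n x (2 * j + 1) = cycleVertex n x j (n / n.gcd x - 1) := by
  simp [closingPathSeq, Nat.mul_add_div]

variable [NeZero n]

lemma cyclePathSeq_mul_add {k : ℕ} (j : ℕ) (hk : k < n / n.gcd x) :
    cyclePathSeq n x (n / n.gcd x * j + k) = cycleVertex n x j k := by
  rw [cyclePathSeq, Nat.mul_add_div div_gcd_pos, Nat.mul_add_mod, Nat.div_eq_of_lt hk,
    Nat.mod_eq_of_lt hk, add_zero]

lemma cyclePathSeq_injOn : Set.InjOn (cyclePathSeq n x) (Set.Iic (n - 1)) := by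
  intro i hi i' hi' h
  have hlt : ∀ {i}, i ∈ Set.Iic (n - 1) → i / (n / n.gcd x) < n.gcd x := fun hi => by
    rw [Nat.div_lt_iff_lt_mul div_gcd_pos, Nat.mul_div_cancel' (Nat.gcd_dvd_left n x)]
    have := NeZero.pos n
    simp only [Set.mem_Iic] at hi; omega
  obtain ⟨hj, hk⟩ := eq_and_eq_of_cycleVertex_eq (hlt hi) (hlt hi') (Nat.mod_lt _ div_gcd_pos)
    (Nat.mod_lt _ div_gcd_pos) h
  rw [← Nat.div_add_mod i (n / n.gcd x), ← Nat.div_add_mod i' (n / n.gcd x), hj, hk]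

lemma closingPathSeq_injOn (hm : 2 ≤ n / n.gcd x) :
    Set.InjOn (closingPathSeq n x) (Set.Iic (2 * n.gcd x - 1)) := by
  intro i hi i' hi' h
  have hlt : ∀ {i}, i ∈ Set.Iic (2 * n.gcd x - 1) → i / 2 < n.gcd x := fun hi => by
    have := Nat.gcd_pos_of_pos_left x (NeZero.pos n)
    simp only [Set.mem_Iic] at hi; omega
  have hklt : ∀ i, (n / n.gcd x - 1) * (i % 2) < n / n.gcd x := fun i => by
    rcases Nat.mod_two_eq_zero_or_one i with h | h <;> rw [h] <;> omega
  obtain ⟨hj, hk⟩ := eq_and_eq_of_cycleVertex_eq (hlt hi) (hlt hi') (hklt i) (hklt i') h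
  have hk' : i % 2 = i' % 2 := Nat.eq_of_mul_eq_mul_left (by omega) hk
  omega

lemma edgeType_of_mem_seqEdges_cyclePathSeq (hn : 2 ≤ n) (hx : 2 * x ≤ n) {N : ℕ}
    {e : Sym2 (ZMod n)} (he : e ∈ seqEdges (cyclePathSeq n x) N) :
    edgeType n e = 1 ∨ edgeType n e = x := by
  obtain ⟨i, -, rfl⟩ := mem_seqEdges.1 he
  set m := n / n.gcd x
  obtain ⟨j, k, hk, rfl⟩ : ∃ j k, k < m ∧ i = m * j + k :=
    ⟨i / m, i % m, Nat.mod_lt _ div_gcd_pos, (Nat.div_add_mod i m).symm⟩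
  rw [cyclePathSeq_mul_add j hk]
  by_cases hk1 : k + 1 < m
  · right
    rw [add_assoc, cyclePathSeq_mul_add j hk1, cycleVertex_succ_right]
    exact edgeType_mk_add_natCast _ hx
  · left
    rw [show m * j + k + 1 = m * (j + 1) + 0 by rw [mul_add]; omega,
      cyclePathSeq_mul_add (j + 1) div_gcd_pos, cycleVertex_succ_zero (k := k) (by omega)]
    simpa using edgeType_mk_add_natCast (cycleVertex n x j k) (y := 1) hn

lemma edgeType_of_mem_seqEdges_closingPathSeq (hn : 2 ≤ n) (hx : 2 * x ≤ n) {N : ℕ}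
    {e : Sym2 (ZMod n)} (he : e ∈ seqEdges (closingPathSeq n x) N) :
    edgeType n e = 1 ∨ edgeType n e = x := by
  obtain ⟨i, -, rfl⟩ := mem_seqEdges.1 he
  have hk : n / n.gcd x - 1 + 1 = n / n.gcd x := Nat.sub_add_cancel div_gcd_pos
  rcases Nat.even_or_odd' i with ⟨j, rfl | rfl⟩
  · right
    rw [closingPathSeq_two_mul, closingPathSeq_two_mul_add_one, cycleVertex_zero_right hk,
      Sym2.eq_swap]
    exact edgeType_mk_add_natCast _ hx
  · left
    rw [show 2 * j + 1 + 1 = 2 * (j + 1) by ring, closingPathSeq_two_mul,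
      closingPathSeq_two_mul_add_one, cycleVertex_succ_zero hk]
    simpa using edgeType_mk_add_natCast (cycleVertex n x j _) (y := 1) hn

lemma mk_mem_seqEdges_cyclePathSeq {j k : ℕ} (hj : j < n.gcd x) (hk : k + 1 < n / n.gcd x) :
    s(cycleVertex n x j k, cycleVertex n x j k + x) ∈ seqEdges (cyclePathSeq n x) (n - 1) := by
  set m := n / n.gcd x
  have hjm : m * (j + 1) ≤ n :=
    (Nat.mul_le_mul_left m hj).trans (Nat.div_mul_cancel (Nat.gcd_dvd_left n x)).le
  refine mem_seqEdges.2 ⟨m * j + k, by rw [Nat.mul_succ] at hjm; omega, ?_⟩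
  rw [cyclePathSeq_mul_add j (by omega), add_assoc, cyclePathSeq_mul_add j hk,
    cycleVertex_succ_right]

lemma mk_mem_seqEdges_closingPathSeq {j k : ℕ} (hj : j < n.gcd x) (hk : k + 1 = n / n.gcd x) :
    s(cycleVertex n x j k, cycleVertex n x j k + x) ∈
      seqEdges (closingPathSeq n x) (2 * n.gcd x - 1) := by
  refine mem_seqEdges.2 ⟨2 * j, by omega, ?_⟩
  rw [closingPathSeq_two_mul, closingPathSeq_two_mul_add_one, ← hk, Nat.add_sub_cancel,
    cycleVertex_zero_right hk, Sym2.eq_swap]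

end TwoPaths

theorem stmt11_general (n x : ℕ) (hx1 : 1 ≤ x) (hx2 : x ≤ n / 2) :
    ∃ Q Q' : Finset (Sym2 (ZMod n)),
      IsPathEdgeSet (⊤ : SimpleGraph (ZMod n)) Q ∧
      IsPathEdgeSet (⊤ : SimpleGraph (ZMod n)) Q' ∧
      (∀ e : Sym2 (ZMod n), edgeType n e = x → e ∈ Q ∪ Q') ∧
      (∀ e ∈ Q ∪ Q', edgeType n e = 1 ∨ edgeType n e = x) := by
  have hx : 2 * x ≤ n := by omega
  have : NeZero n := ⟨by omega⟩
  refine ⟨seqEdges (cyclePathSeq n x) (n - 1), seqEdges (closingPathSeq n x) (2 * n.gcd x - 1),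
    isPathEdgeSet_seqEdges cyclePathSeq_injOn,
    isPathEdgeSet_seqEdges (closingPathSeq_injOn (two_le_div_gcd hx1 hx)), ?_, ?_⟩
  · intro e he
    obtain ⟨v, rfl⟩ := exists_eq_mk_add_of_edgeType_eq (by omega) he
    obtain ⟨j, hj, k, hk, rfl⟩ := exists_cycleVertex_eq (x := x) v
    rw [mem_union]
    by_cases hk1 : k + 1 < n / n.gcd x
    · exact .inl (mk_mem_seqEdges_cyclePathSeq hj hk1)
    · exact .inr (mk_mem_seqEdges_closingPathSeq hj (by omega))
  · intro e he
    rcases mem_union.1 he with he | he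
    · exact edgeType_of_mem_seqEdges_cyclePathSeq (by omega) hx he
    · exact edgeType_of_mem_seqEdges_closingPathSeq (by omega) hx he

/-- For each type `x` there are two paths covering all `x`-type edges of `K_n`
using only edges of types `1` and `x`. -/
theorem stmt11 (n x : ℕ) (hn : 2 ≤ n) (hx1 : 1 ≤ x) (hx2 : x ≤ n / 2) :
    ∃ Q Q' : Finset (Sym2 (ZMod n)),
      IsPathEdgeSet (⊤ : SimpleGraph (ZMod n)) Q ∧
      IsPathEdgeSet (⊤ : SimpleGraph (ZMod n)) Q' ∧
      (∀ e : Sym2 (ZMod n), edgeType n e = x → e ∈ Q ∪ Q') ∧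
      (∀ e ∈ Q ∪ Q', edgeType n e = 1 ∨ edgeType n e = x) :=
  stmt11_general n x hx1 hx2
end

section
/- For n ≡ 3 or 5 (mod 6) with n ≥ 13, the edge set L = M_0 ∪ R ∪ B defined in the paper's construction is a linear forest in K_n: every vertex has degree at most 2 in L and L contains no cycle. -/
open SimpleGraph Finset

/-- The matching `M_0 = {(-i, i) : i ∈ [(n-1)/2]}`. -/
def M0 (n : ℕ) : Finset (Sym2 (ZMod n)) :=
  (Finset.Icc 1 ((n - 1) / 2)).image fun i : ℕ => s(-(i : ZMod n), (i : ZMod n))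

def R1 (n : ℕ) : Finset (Sym2 (ZMod n)) :=
  {s((1 : ZMod n), -(((n - 3) / 2 : ℕ) : ZMod n)),
   s((-1 : ZMod n), -(((n - 1) / 2 : ℕ) : ZMod n))}

def rPar (n : ℕ) : ℕ := if Odd ((n - 1) / 2) then (n - 7) / 4 else (n - 9) / 4

def R2 (n : ℕ) : Finset (Sym2 (ZMod n)) :=
  (Finset.range (rPar n)).image fun k =>
    s(-(((3 + 2 * k : ℕ) : ZMod n)), (((n - 1) / 2 - k : ℕ) : ZMod n))

/-- `i_b`: the largest even `i` with `2i + 3 ≤ (n-1)/4`. -/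
def ib (n : ℕ) : ℕ := 2 * ((((n - 1) / 4) - 3) / 4)

def xb (n : ℕ) : ℕ := 2 * ib n + 3

def tPar (n : ℕ) : ℕ := (xb n + 1) / 2

def Bset (n : ℕ) : Finset (Sym2 (ZMod n)) :=
  (Finset.range (tPar n)).image fun k =>
    s((((2 * k : ℕ) : ZMod n) - (((xb n - 3) / 2 : ℕ) : ZMod n)),
      ((((xb n + 3) / 2 + k : ℕ) : ZMod n)))

/-- The linear forest `L = M_0 ∪ R ∪ B`. -/
def Lforest (n : ℕ) : Finset (Sym2 (ZMod n)) := M0 n ∪ R1 n ∪ R2 n ∪ Bset n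

/-!
`M_0` joins every nonzero vertex `x` to `-x`, and `R ∪ B` is a matching, so every vertex has
degree at most 2 in `L`, and the two neighbours of a vertex `x` on a cycle of `L` are `-x` and its
`R ∪ B`-partner; in particular the vertex set of a cycle is closed under negation. We give an odd
potential `η : ZMod n → ℤ` with `η x + η y > 0` on every edge of `R ∪ B`. Summing `η x + η y`
over the edges of a cycle gives twice the sum of `η` over a negation-closed set, i.e. `0`, while
`M_0`-edges contribute `0` and `R ∪ B`-edges contribute positively.

With `n = 2m + 1`, `η` is read off the representative in `[-m, m]`; for `p > 0` it is
`6m - 16 - 3 |3p - (2m + 3)|` except at `p ∈ {1, 5, m - 1, m}`. The edge `{-(3 + 2k), m - k}` of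
`R_2` doubles `|3p - (2m + 3)|`, which never vanishes since `3 ∤ m`, i.e. `n ≢ 1 (mod 6)`.
-/

section OddPotential

lemma Finset.sum_eq_zero_of_forall_neg_mem {α : Type*} [InvolutiveNeg α] {s : Finset α}
    (hs : ∀ x ∈ s, -x ∈ s) {f : α → ℤ} (hf : ∀ x, f (-x) = -f x) : ∑ x ∈ s, f x = 0 :=
  Finset.sum_involution (fun x _ => -x) (fun x _ => by rw [hf]; omega)
    (fun x _ hx hneg => hx (by have := hf x; rw [hneg] at this; omega))
    hs (fun x _ => neg_neg x)

lemma SimpleGraph.Walk.sum_darts_fst_add_snd {V : Type*} {G : SimpleGraph V} {v : V}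
    (c : G.Walk v v) (f : V → ℤ) :
    (c.darts.map fun d => f d.fst + f d.snd).sum = 2 * (c.support.tail.map f).sum := by
  have hfst : (c.darts.map fun d => f d.fst).sum = (c.support.tail.map f).sum := by
    rw [show (fun d : G.Dart => f d.fst) = f ∘ (·.fst) from rfl, ← List.map_map,
      c.map_fst_darts]
    exact (c.tail_support_perm_dropLast_support.map f).sum_eq.symm
  have hsnd : (c.darts.map fun d => f d.snd).sum = (c.support.tail.map f).sum := by
    rw [show (fun d : G.Dart => f d.snd) = f ∘ (·.snd) from rfl, ← List.map_map,
      c.map_snd_darts]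
  rw [List.sum_map_add, hfst, hsnd]
  ring

variable {α : Type*} [InvolutiveNeg α] {G : SimpleGraph α} {R : α → α → Prop}

lemma SimpleGraph.ncard_neighborSet_le_two_of_adj (hadj : ∀ x y, G.Adj x y → y = -x ∨ R x y)
    (hR : ∀ x y z, R x y → R x z → y = z) (v : α) : (G.neighborSet v).ncard ≤ 2 := by
  have hsing : {y | R v y}.Subsingleton := fun y hy z hz => hR v y z hy hz
  calc (G.neighborSet v).ncard ≤ (insert (-v) {y | R v y}).ncard :=
        Set.ncard_le_ncard (fun y hy => hadj v y hy) (hsing.finite.insert _)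
    _ ≤ {y | R v y}.ncard + 1 := Set.ncard_insert_le _ _
    _ ≤ 2 := by
        have := (Set.ncard_le_one hsing.finite).mpr fun a ha b hb => hsing ha hb
        omega

lemma SimpleGraph.Walk.IsCycle.neg_mem_support_and_exists_rel
    (hadj : ∀ x y, G.Adj x y → y = -x ∨ R x y) (hR : ∀ x y z, R x y → R x z → y = z)
    {v x : α} {c : G.Walk v v} (hc : c.IsCycle) (hx : x ∈ c.support) :
    -x ∈ c.support ∧ ∃ y, R x y ∧ s(x, y) ∈ c.edges := by
  obtain ⟨a, b, hab, hnbr⟩ := Set.ncard_eq_two.mp (hc.ncard_neighborSet_toSubgraph_eq_two hx)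
  have hcyc : ∀ y ∈ c.toSubgraph.neighborSet x,
      (y = -x ∨ R x y) ∧ y ∈ c.support ∧ s(x, y) ∈ c.edges := fun y hy =>
    ⟨hadj x y hy.adj_sub, c.mem_verts_toSubgraph.mp hy.snd_mem, c.mem_edges_toSubgraph.mp hy⟩
  obtain ⟨ha, has, hae⟩ := hcyc a (by rw [hnbr]; exact Or.inl rfl)
  obtain ⟨hb, hbs, hbe⟩ := hcyc b (by rw [hnbr]; exact Or.inr rfl)
  rcases ha with rfl | ha <;> rcases hb with rfl | hb
  · exact absurd rfl hab
  · exact ⟨has, b, hb, hbe⟩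
  · exact ⟨hbs, a, ha, hae⟩
  · exact absurd (hR x a b ha hb) hab

theorem SimpleGraph.isAcyclic_of_odd_potential (hadj : ∀ x y, G.Adj x y → y = -x ∨ R x y)
    (hR : ∀ x y z, R x y → R x z → y = z) (η : α → ℤ) (hη : ∀ x, η (-x) = -η x)
    (hpos : ∀ x y, R x y → 0 < η x + η y) : G.IsAcyclic := by
  classical
  intro v c hc
  have hnonneg : ∀ w ∈ c.darts.map fun d => η d.fst + η d.snd, 0 ≤ w := by
    simp only [List.mem_map]
    rintro _ ⟨d, -, rfl⟩
    rcases hadj _ _ d.adj with h | h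
    · rw [h, hη]; omega
    · exact (hpos _ _ h).le
  obtain ⟨-, y, hvy, hmem⟩ := hc.neg_mem_support_and_exists_rel hadj hR c.start_mem_support
  obtain ⟨d, hd, hde⟩ := List.mem_map.mp hmem
  have hdpos : 0 < η d.fst + η d.snd := by
    rcases Sym2.eq_iff.mp hde with ⟨h1, h2⟩ | ⟨h1, h2⟩
    · rw [h1, h2]; exact hpos _ _ hvy
    · rw [h1, h2, add_comm]; exact hpos _ _ hvy
  have hzero : (c.support.tail.map η).sum = 0 := by
    rw [← List.sum_toFinset η hc.support_nodup]
    refine Finset.sum_eq_zero_of_forall_neg_mem (fun x hx => ?_) hη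
    rw [List.mem_toFinset] at hx ⊢
    have hneg := (hc.neg_mem_support_and_exists_rel hadj hR (List.mem_of_mem_tail hx)).1
    rw [← c.cons_tail_support, List.mem_cons] at hneg
    rcases hneg with h | h
    · rw [h]; exact c.end_mem_tail_support hc.not_nil
    · exact h
  have := List.single_le_sum hnonneg _
    (List.mem_map_of_mem (f := fun d => η d.fst + η d.snd) hd)
  rw [c.sum_darts_fst_add_snd, hzero] at this
  omega

end OddPotential

section IntegerModel

/-- The constraints on `m = (n - 1) / 2`, `r` and `i = i_b` used by the argument. -/
structure IsAdmissible (m r i : ℤ) : Prop where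
  seven_le : 7 ≤ m
  two_mul_add_three_le : 2 * r + 3 ≤ m
  nonneg : 0 ≤ i
  even : Even i
  four_mul_add_six_le : 4 * i + 6 ≤ m
  not_dvd : ¬ 3 ∣ m

/-- `s(a, b)` with `a, b ∈ [-m, m]` represents an edge of `R_1`, of `R_2` or of `B`
(for which `(x_b - 3) / 2 = i`, `(x_b + 3) / 2 = i + 3` and `t = i + 2`). -/
def IsRBPair (m r i a b : ℤ) : Prop :=
  (a = 1 ∧ b = -(m - 1)) ∨ (a = -1 ∧ b = -m) ∨
  (∃ k, 0 ≤ k ∧ k < r ∧ a = -(3 + 2 * k) ∧ b = m - k) ∨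
  (∃ k, 0 ≤ k ∧ k < i + 2 ∧ a = 2 * k - i ∧ b = i + 3 + k)

variable {m r i : ℤ}

lemma IsRBPair.bounds {a b : ℤ} (hp : IsAdmissible m r i) (h : IsRBPair m r i a b) :
    -m ≤ a ∧ a ≤ m ∧ -m ≤ b ∧ b ≤ m := by
  obtain ⟨h7, hr, hi0, -, hi, -⟩ := hp
  rcases h with ⟨rfl, rfl⟩ | ⟨rfl, rfl⟩ | ⟨k, _, _, rfl, rfl⟩ | ⟨k, _, _, rfl, rfl⟩ <;> omega

lemma IsRBPair.partner_unique {x y z : ℤ} (hp : IsAdmissible m r i)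
    (hy : IsRBPair m r i x y ∨ IsRBPair m r i y x)
    (hz : IsRBPair m r i x z ∨ IsRBPair m r i z x) : y = z := by
  obtain ⟨h7, hr, hi0, ⟨j, hj⟩, hi, -⟩ := hp
  unfold IsRBPair at hy hz
  rcases hy with (⟨_, _⟩ | ⟨_, _⟩ | ⟨k, _, _, _, _⟩ | ⟨k, _, _, _, _⟩) |
      (⟨_, _⟩ | ⟨_, _⟩ | ⟨k, _, _, _, _⟩ | ⟨k, _, _, _, _⟩) <;>
    rcases hz with (⟨_, _⟩ | ⟨_, _⟩ | ⟨l, _, _, _, _⟩ | ⟨l, _, _, _, _⟩) |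
      (⟨_, _⟩ | ⟨_, _⟩ | ⟨l, _, _, _, _⟩ | ⟨l, _, _, _, _⟩) <;>
    omega

def potMag (m p : ℤ) : ℤ :=
  if p = 1 then -4 else if p = 5 then -6 else if p = m - 1 then -5 else if p = m then 3
  else 6 * m - 16 - 3 * |3 * p - (2 * m + 3)|

def pot (m x : ℤ) : ℤ := x.sign * potMag m |x|

lemma pot_neg (x : ℤ) : pot m (-x) = -pot m x := by
  simp [pot, Int.sign_neg, abs_neg]

lemma pot_zero : pot m 0 = 0 := by
  simp [pot]

lemma pot_of_pos {x : ℤ} (hx : 0 < x) : pot m x = potMag m x := by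
  simp [pot, Int.sign_eq_one_of_pos hx, abs_of_pos hx]

lemma pot_of_neg {x : ℤ} (hx : x < 0) : pot m x = -potMag m (-x) := by
  rw [← pot_of_pos (neg_pos.mpr hx), pot_neg, neg_neg]

lemma potMag_one : potMag m 1 = -4 := by simp [potMag]

lemma potMag_five : potMag m 5 = -6 := by simp [potMag]

lemma potMag_sub_one (hm : 7 ≤ m) : potMag m (m - 1) = -5 := by
  simp [potMag, show m - 1 ≠ 1 by omega, show m - 1 ≠ 5 by omega]

lemma potMag_self (hm : 7 ≤ m) : potMag m m = 3 := by
  simp [potMag, show m ≠ 1 by omega, show m ≠ 5 by omega, show m ≠ m - 1 by omega]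

lemma potMag_eq {p : ℤ} (h1 : p ≠ 1) (h5 : p ≠ 5) (hm1 : p ≠ m - 1) (hm : p ≠ m) :
    potMag m p = 6 * m - 16 - 3 * |3 * p - (2 * m + 3)| := by
  simp [potMag, h1, h5, hm1, hm]

lemma potMag_of_three_mul_le {p : ℤ} (h1 : p ≠ 1) (h5 : p ≠ 5) (hm1 : p ≠ m - 1) (hm : p ≠ m)
    (hp : 3 * p ≤ 2 * m + 3) : potMag m p = 9 * p - 25 := by
  rw [potMag_eq h1 h5 hm1 hm, abs_of_nonpos (by omega)]
  ring

lemma abs_three_mul_sub_eq_two_mul (k : ℤ) :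
    |3 * (3 + 2 * k) - (2 * m + 3)| = 2 * |3 * (m - k) - (2 * m + 3)| := by
  rw [show 3 * (3 + 2 * k) - (2 * m + 3) = -2 * (3 * (m - k) - (2 * m + 3)) by ring, abs_mul]
  norm_num

lemma pot_add_pos_of_R2 (hp : IsAdmissible m r i) {k : ℤ} (hk0 : 0 ≤ k) (hkr : k < r) :
    0 < pot m (-(3 + 2 * k)) + pot m (m - k) := by
  obtain ⟨h7, hr, -, -, -, h3⟩ := hp
  rw [pot_neg, pot_of_pos (by omega), pot_of_pos (by omega)]
  rcases (by omega : k = 0 ∨ k = 1 ∨ 2 ≤ k) with rfl | rfl | hk2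
  · rw [potMag_of_three_mul_le (by omega) (by omega) (by omega) (by omega) (by omega), sub_zero,
      potMag_self h7]
    norm_num
  · rw [show (3 : ℤ) + 2 * 1 = 5 by norm_num, potMag_five, potMag_sub_one h7]
    norm_num
  · rw [potMag_eq (by omega) (by omega) (by omega) (by omega),
      potMag_eq (by omega) (by omega) (by omega) (by omega), abs_three_mul_sub_eq_two_mul]
    have : 0 < |3 * (m - k) - (2 * m + 3)| := abs_pos.mpr (by omega)
    omega

lemma pot_add_pos_of_B (hp : IsAdmissible m r i) {k : ℤ} (hk0 : 0 ≤ k) (hki : k < i + 2) :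
    0 < pot m (2 * k - i) + pot m (i + 3 + k) := by
  obtain ⟨h7, -, hi0, ⟨j, hj⟩, hi, -⟩ := hp
  have hend : pot m (i + 3 + k) = potMag m (i + 3 + k) := pot_of_pos (by omega)
  rcases lt_trichotomy (2 * k - i) 0 with hneg | hzero | hpos
  · rw [pot_of_neg hneg, hend, potMag_of_three_mul_le (by omega) (by omega) (by omega)
      (by omega) (by omega)]
    by_cases h5 : i + 3 + k = 5
    · rw [h5, potMag_five]
      omega
    · rw [potMag_of_three_mul_le (by omega) h5 (by omega) (by omega) (by omega)]
      omega
  · rw [hzero, pot_zero, hend, potMag_of_three_mul_le (by omega) (by omega) (by omega)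
      (by omega) (by omega)]
    omega
  · rw [pot_of_pos hpos, hend,
      potMag_of_three_mul_le (by omega) (by omega) (by omega) (by omega) (by omega),
      potMag_of_three_mul_le (by omega) (by omega) (by omega) (by omega) (by omega)]
    omega

lemma IsRBPair.pot_add_pos {a b : ℤ} (hp : IsAdmissible m r i) (h : IsRBPair m r i a b) :
    0 < pot m a + pot m b := by
  have h7 := hp.seven_le
  rcases h with ⟨rfl, rfl⟩ | ⟨rfl, rfl⟩ | ⟨k, hk0, hkr, rfl, rfl⟩ | ⟨k, hk0, hki, rfl, rfl⟩
  · rw [pot_neg, pot_of_pos one_pos, pot_of_pos (by omega), potMag_one, potMag_sub_one h7]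
    norm_num
  · rw [pot_neg, pot_neg, pot_of_pos one_pos, pot_of_pos (by omega), potMag_one,
      potMag_self h7]
    norm_num
  · exact pot_add_pos_of_R2 hp hk0 hkr
  · exact pot_add_pos_of_B hp hk0 hki

end IntegerModel

lemma ZMod.valMinAbs_intCast_of_le {n : ℕ} {m a : ℤ} (hn : (n : ℤ) = 2 * m + 1) (ha : -m ≤ a)
    (ha' : a ≤ m) : (a : ZMod n).valMinAbs = a := by
  have : NeZero n := ⟨by omega⟩
  exact (ZMod.valMinAbs_spec _ _).mpr ⟨rfl, by constructor <;> omega⟩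

lemma isAdmissible_rPar_ib {n : ℕ} (hn : 13 ≤ n) (hmod : n % 6 = 3 ∨ n % 6 = 5) :
    IsAdmissible ((n - 1) / 2 : ℕ) (rPar n) (ib n) where
  seven_le := by omega
  two_mul_add_three_le := by
    unfold rPar
    split_ifs with h <;> [have := Nat.odd_iff.mp h; have := Nat.not_odd_iff.mp h] <;> omega
  nonneg := by omega
  even := ⟨(((n - 1) / 4 - 3) / 4 : ℕ), by unfold ib; push_cast; ring⟩
  four_mul_add_six_le := by unfold ib; omega
  not_dvd := by omega

lemma exists_isRBPair_of_mem {n : ℕ} (hn : 13 ≤ n) {e : Sym2 (ZMod n)}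
    (he : e ∈ R1 n ∪ R2 n ∪ Bset n) :
    ∃ a b : ℤ, IsRBPair ((n - 1) / 2 : ℕ) (rPar n) (ib n) a b ∧
      e = s((a : ZMod n), (b : ZMod n)) := by
  have hr : rPar n ≤ (n - 1) / 2 := by unfold rPar; split_ifs <;> omega
  have hx : (xb n - 3) / 2 = ib n ∧ (xb n + 3) / 2 = ib n + 3 ∧ tPar n = ib n + 2 := by
    have hxb : xb n = 2 * ib n + 3 := rfl
    unfold tPar
    omega
  simp only [Finset.mem_union, R1, R2, Bset, Finset.mem_insert, Finset.mem_singleton,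
    Finset.mem_image, Finset.mem_range, hx, show (n - 3) / 2 = (n - 1) / 2 - 1 by omega] at he
  generalize hm : (n - 1) / 2 = m at hr he ⊢
  rcases he with ((rfl | rfl) | ⟨k, hk, rfl⟩) | ⟨k, hk, rfl⟩
  · refine ⟨1, -((m : ℤ) - 1), Or.inl ⟨rfl, rfl⟩, ?_⟩
    rw [Nat.cast_sub (show 1 ≤ m by omega)]
    push_cast
    rfl
  · exact ⟨-1, -(m : ℤ), Or.inr (Or.inl ⟨rfl, rfl⟩), by push_cast; rfl⟩
  · refine ⟨-(3 + 2 * k), (m : ℤ) - k,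
      Or.inr (Or.inr (Or.inl ⟨k, by omega, by omega, rfl, rfl⟩)), ?_⟩
    rw [Nat.cast_sub (show k ≤ m by omega)]
    push_cast
    rfl
  · refine ⟨2 * k - ib n, ib n + 3 + k,
      Or.inr (Or.inr (Or.inr ⟨k, by omega, by omega, rfl, rfl⟩)), ?_⟩
    push_cast
    rfl

lemma isRBPair_valMinAbs_of_mem {n : ℕ} (hn : 13 ≤ n) (hmod : n % 6 = 3 ∨ n % 6 = 5)
    {x y : ZMod n} (h : s(x, y) ∈ R1 n ∪ R2 n ∪ Bset n) :
    IsRBPair ((n - 1) / 2 : ℕ) (rPar n) (ib n) x.valMinAbs y.valMinAbs ∨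
      IsRBPair ((n - 1) / 2 : ℕ) (rPar n) (ib n) y.valMinAbs x.valMinAbs := by
  obtain ⟨a, b, hab, he⟩ := exists_isRBPair_of_mem hn h
  obtain ⟨ha, ha', hb, hb'⟩ := hab.bounds (isAdmissible_rPar_ib hn hmod)
  have hn' : (n : ℤ) = 2 * ((n - 1) / 2 : ℕ) + 1 := by omega
  rcases Sym2.eq_iff.mp he with ⟨rfl, rfl⟩ | ⟨rfl, rfl⟩
  · left
    rwa [ZMod.valMinAbs_intCast_of_le hn' ha ha', ZMod.valMinAbs_intCast_of_le hn' hb hb']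
  · right
    rwa [ZMod.valMinAbs_intCast_of_le hn' ha ha', ZMod.valMinAbs_intCast_of_le hn' hb hb']

lemma adj_fromEdgeSet_Lforest {n : ℕ} {x y : ZMod n}
    (h : (SimpleGraph.fromEdgeSet (↑(Lforest n) : Set (Sym2 (ZMod n)))).Adj x y) :
    y = -x ∨ s(x, y) ∈ R1 n ∪ R2 n ∪ Bset n := by
  rw [SimpleGraph.fromEdgeSet_adj, Finset.mem_coe, Lforest, Finset.union_assoc,
    Finset.union_assoc, Finset.mem_union, ← Finset.union_assoc] at h
  rcases h.1 with hM | hRB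
  · obtain ⟨j, -, hj⟩ := Finset.mem_image.mp hM
    rcases Sym2.eq_iff.mp hj with ⟨rfl, rfl⟩ | ⟨rfl, rfl⟩
    · exact Or.inl (neg_neg _).symm
    · exact Or.inl rfl
  · exact Or.inr hRB

/-- `L = M_0 ∪ R ∪ B` is a linear forest: acyclic with maximum degree at most 2. -/
theorem stmt15 (n : ℕ) (hn : 13 ≤ n) (hmod : n % 6 = 3 ∨ n % 6 = 5) :
    (SimpleGraph.fromEdgeSet (↑(Lforest n) : Set (Sym2 (ZMod n)))).IsAcyclic ∧
    ∀ v : ZMod n,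
      ((SimpleGraph.fromEdgeSet (↑(Lforest n) : Set (Sym2 (ZMod n)))).neighborSet v).ncard
        ≤ 2 := by
  have hp := isAdmissible_rPar_ib hn hmod
  have hRB : ∀ x y z : ZMod n, s(x, y) ∈ R1 n ∪ R2 n ∪ Bset n →
      s(x, z) ∈ R1 n ∪ R2 n ∪ Bset n → y = z := fun x y z hy hz =>
    ZMod.valMinAbs_inj.mp <| IsRBPair.partner_unique hp (isRBPair_valMinAbs_of_mem hn hmod hy)
      (isRBPair_valMinAbs_of_mem hn hmod hz)
  refine ⟨SimpleGraph.isAcyclic_of_odd_potential (fun _ _ => adj_fromEdgeSet_Lforest) hRB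
    (fun x => pot ((n - 1) / 2 : ℕ) x.valMinAbs) (fun x => ?_) (fun x y hxy => ?_),
    SimpleGraph.ncard_neighborSet_le_two_of_adj (fun _ _ => adj_fromEdgeSet_Lforest) hRB⟩
  · rw [ZMod.valMinAbs_neg_of_ne_half (by omega), pot_neg]
  · rcases isRBPair_valMinAbs_of_mem hn hmod hxy with h | h
    · exact h.pot_add_pos hp
    · rw [add_comm]
      exact h.pot_add_pos hp
end

section
/- Let p be an odd prime, g a primitive root mod p, and k = (p-1)/2. In the path P = (p, g, g+g^2, …, Σ_{i=1}^{p-2} g^i) on K_p, the first k edges have pairwise distinct types, the (k+i)-th edge has the same type as the i-th edge for 1 ≤ i ≤ k-2, and the k-th edge is the unique 1-type edge of P. Hence P contains exactly two edges of every type in [k] except type 1, which appears once. -/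
/-!
With `S m = ∑_{j=1}^m g ^ j`, edge `i` of the path joins `S (i - 1)` and
`S i = S (i - 1) + g ^ i`, so its type is `|g ^ i|`, the absolute value of the least absolute
residue of `g ^ i`. Since `g ^ k = -1`, `|g ^ i| = |g ^ j|` iff `g ^ i = ± g ^ j` iff
`i ≡ j (mod k)`. Hence the first `k` edges have distinct types, so they take every type in
`[1, k]` exactly once, the `k`-th one having type `|-1| = 1`, and edges `k + 1, …, 2k - 1` repeat
the types of edges `1, …, k - 1`. All `2k - 1` edges are distinct because the vertices
`S 0, …, S (2k - 1)` are: `(g - 1) S m = g ^ (m + 1) - g` and the powers `g, …, g ^ (2k)` are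
distinct.
-/

open SimpleGraph Finset

lemma eq_or_eq_add_of_modEq {k i j : ℕ} (h : i ≡ j [MOD k]) (hij : i ≤ j)
    (hj : j < i + 2 * k) : j = i ∨ j = i + k := by
  obtain ⟨c, hc⟩ := (Nat.modEq_iff_dvd' hij).mp h
  rcases c with _ | _ | c
  · omega
  · omega
  · have := Nat.mul_le_mul_left k (show 2 ≤ c + 1 + 1 by omega)
    omega

lemma filter_Icc_modEq_eq {k r : ℕ} (hr : r ∈ Icc 1 k) :
    {i ∈ Icc 1 (2 * k - 1) | i ≡ r [MOD k]} = if r = k then {k} else {r, r + k} := by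
  rw [mem_Icc] at hr
  have hmodEq : ∀ i ∈ Icc 1 (2 * k - 1), i ≡ r [MOD k] ↔ i = r ∨ i = r + k := by
    intro i hi
    rw [mem_Icc] at hi
    constructor
    · intro h
      rcases le_total r i with hri | hir
      · exact eq_or_eq_add_of_modEq h.symm hri (by omega)
      · rcases eq_or_eq_add_of_modEq h hir (by omega) with h' | h' <;> omega
    · rintro (rfl | rfl)
      · rfl
      · exact Nat.add_mod_right r k
  rw [filter_congr hmodEq]
  ext i
  split_ifs <;> simp only [mem_filter, mem_Icc, mem_insert, mem_singleton] <;> omega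

lemma card_filter_Icc_modEq {k r : ℕ} (hr : r ∈ Icc 1 k) :
    #{i ∈ Icc 1 (2 * k - 1) | i ≡ r [MOD k]} = if r = k then 1 else 2 := by
  rw [filter_Icc_modEq_eq hr]
  split_ifs with hrk
  · rfl
  · exact card_pair (by have := mem_Icc.mp hr; omega)

lemma injOn_sym2_pred_self {V : Type*} {f : ℕ → V} {n : ℕ} (hf : Set.InjOn f (Set.Iio n)) :
    Set.InjOn (fun i => s(f (i - 1), f i)) (Set.Ioo 0 n) := by
  rintro a ⟨ha₀, ha⟩ b ⟨hb₀, hb⟩ hab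
  rcases Sym2.eq_iff.mp hab with ⟨-, h⟩ | ⟨h₁, h₂⟩
  · exact hf ha hb h
  · have h₁' := hf (show a - 1 < n by omega) hb h₁
    have h₂' := hf ha (show b - 1 < n by omega) h₂
    omega

lemma injOn_sum_Icc_pow {R : Type*} [CommRing R] (g : R) :
    Set.InjOn (fun m => ∑ j ∈ Icc 1 m, g ^ j) (Set.Iio (orderOf g)) := by
  intro m hm m' hm' h
  have hfin : IsOfFinOrder g := orderOf_pos_iff.mp (by simp only [Set.mem_Iio] at hm; omega)
  have hgeom : ∀ m, g * g ^ m = (∑ j ∈ Icc 1 m, g ^ j) * (g - 1) + g := fun m => by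
    rw [← Ico_add_one_right_eq_Icc, geom_sum_Ico_mul _ (by omega), pow_one, sub_add_cancel,
      pow_succ']
  have hpow : g * g ^ m = g * g ^ m' := by
    rw [hgeom, hgeom]
    exact congrArg (· * (g - 1) + g) h
  exact pow_injOn_Iio_orderOf hm hm' (hfin.isUnit.mul_left_cancel hpow)

lemma typeCount_image {n : ℕ} {ι : Type*} {s : Finset ι} {e : ι → Sym2 (ZMod n)}
    (he : Set.InjOn e s) (x : ℕ) :
    typeCount n (s.image e) x = #{i ∈ s | edgeType n (e i) = x} := by
  rw [typeCount, filter_image, card_image_of_injOn (he.mono (filter_subset _ _))]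

section edgeTypes

variable {n : ℕ} [NeZero n]

lemma cdist_eq_natAbs_valMinAbs (v u : ZMod n) : cdist n v u = (v - u).valMinAbs.natAbs := by
  rw [cdist, ZMod.valMinAbs_natAbs_eq_min, ← neg_sub v u, ZMod.neg_val]
  split_ifs with h
  · simp [h]
  · rfl

lemma edgeType_mk_add_s19 (u d : ZMod n) : edgeType n s(u, u + d) = d.valMinAbs.natAbs := by
  simp only [edgeType, Sym2.lift_mk]
  rw [cdist_eq_natAbs_valMinAbs, sub_add_cancel_left, ZMod.natAbs_valMinAbs_neg]

lemma edgeType_sum_Icc_pow (g : ZMod n) {i : ℕ} (hi : 1 ≤ i) :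
    edgeType n s(∑ j ∈ Icc 1 (i - 1), g ^ j, ∑ j ∈ Icc 1 i, g ^ j) =
      (g ^ i).valMinAbs.natAbs := by
  obtain ⟨m, rfl⟩ := Nat.exists_eq_add_of_le' hi
  rw [Nat.add_sub_cancel, sum_Icc_succ_top (by omega), edgeType_mk_add_s19]

end edgeTypes

lemma pow_eq_neg_one_of_orderOf_eq_two_mul {R : Type*} [CommRing R] [IsDomain R] {g : R} {k : ℕ}
    (hg : orderOf g = 2 * k) (hk : k ≠ 0) : g ^ k = -1 := by
  have h := (IsPrimitiveRoot.orderOf g).pow_of_dvd hk (hg ▸ dvd_mul_left k 2)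
  rw [hg, Nat.mul_div_cancel _ (Nat.pos_of_ne_zero hk)] at h
  exact h.eq_neg_one_of_two_right

section primitiveRoot

variable {p : ℕ} [Fact p.Prime] {g : ZMod p} {k : ℕ}

lemma periodic_natAbs_valMinAbs_pow (hg : orderOf g = 2 * k) (hk : k ≠ 0) :
    Function.Periodic (fun i => (g ^ i).valMinAbs.natAbs) k := fun i => by
  simp only [pow_add, pow_eq_neg_one_of_orderOf_eq_two_mul hg hk, mul_neg_one,
    ZMod.natAbs_valMinAbs_neg]

lemma natAbs_valMinAbs_pow_eq_iff (hg : orderOf g = 2 * k) (hk : k ≠ 0) (i j : ℕ) :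
    (g ^ i).valMinAbs.natAbs = (g ^ j).valMinAbs.natAbs ↔ i ≡ j [MOD k] := by
  constructor
  · have hfin : IsOfFinOrder g := orderOf_pos_iff.mp (by omega)
    rw [ZMod.natAbs_valMinAbs_eq_natAbs_valMinAbs, ← mul_neg_one,
      ← pow_eq_neg_one_of_orderOf_eq_two_mul hg hk, ← pow_add, hfin.pow_eq_pow_iff_modEq,
      hfin.pow_eq_pow_iff_modEq, hg]
    rintro (h | h)
    · exact h.of_mul_left 2
    · exact (h.of_mul_left 2).trans (Nat.add_mod_right j k)
  · intro h
    have hper := periodic_natAbs_valMinAbs_pow hg hk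
    rw [← hper.map_mod_nat i, ← hper.map_mod_nat j]
    exact congrArg (fun i => (g ^ i).valMinAbs.natAbs) h

lemma injOn_natAbs_valMinAbs_pow (hg : orderOf g = 2 * k) (hk : k ≠ 0) :
    Set.InjOn (fun i => (g ^ i).valMinAbs.natAbs) (Set.Icc 1 k) := by
  rintro i ⟨hi₁, hik⟩ j ⟨hj₁, hjk⟩ h
  have hij := (natAbs_valMinAbs_pow_eq_iff hg hk i j).mp h
  rcases le_total i j with hle | hle
  · rcases eq_or_eq_add_of_modEq hij hle (by omega) with h' | h' <;> omega
  · rcases eq_or_eq_add_of_modEq hij.symm hle (by omega) with h' | h' <;> omega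

lemma natAbs_valMinAbs_pow_mem_Icc (hp : p = 2 * k + 1) (hg : orderOf g = 2 * k) (hk : k ≠ 0)
    (i : ℕ) : (g ^ i).valMinAbs.natAbs ∈ Icc 1 k := by
  have hg₀ : g ^ i ≠ 0 :=
    ((orderOf_pos_iff.mp (by omega : 0 < orderOf g)).isUnit.pow i).ne_zero
  subst hp
  have hle := (g ^ i).natAbs_valMinAbs_le
  rw [mem_Icc, Nat.one_le_iff_ne_zero, Ne, Int.natAbs_eq_zero, ZMod.valMinAbs_eq_zero]
  exact ⟨hg₀, by omega⟩

lemma exists_natAbs_valMinAbs_pow_eq (hp : p = 2 * k + 1) (hg : orderOf g = 2 * k)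
    (hk : k ≠ 0) {x : ℕ} (hx : x ∈ Icc 1 k) :
    ∃ r ∈ Icc 1 k, (g ^ r).valMinAbs.natAbs = x := by
  obtain ⟨r, hr, rfl⟩ := surj_on_of_inj_on_of_card_le (fun r _ => (g ^ r).valMinAbs.natAbs)
    (fun r _ => natAbs_valMinAbs_pow_mem_Icc hp hg hk r)
    (fun _ _ h₁ h₂ h => injOn_natAbs_valMinAbs_pow hg hk (mem_Icc.mp h₁) (mem_Icc.mp h₂) h)
    le_rfl x hx
  exact ⟨r, hr, rfl⟩

lemma natAbs_valMinAbs_pow_eq_one (hg : orderOf g = 2 * k) (hk : k ≠ 0) :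
    (g ^ k).valMinAbs.natAbs = 1 := by
  have := (Fact.out : p.Prime).two_le
  rw [pow_eq_neg_one_of_orderOf_eq_two_mul hg hk, ZMod.natAbs_valMinAbs_neg,
    ZMod.valMinAbs_natAbs_eq_min, ZMod.val_one]
  omega

lemma typeCount_image_sum_Icc_pow (hg : orderOf g = 2 * k) (hk : k ≠ 0) {r : ℕ}
    (hr : r ∈ Icc 1 k) :
    typeCount p ((Icc 1 (2 * k - 1)).image
        fun i => s(∑ j ∈ Icc 1 (i - 1), g ^ j, ∑ j ∈ Icc 1 i, g ^ j))
      ((g ^ r).valMinAbs.natAbs) = if r = k then 1 else 2 := by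
  have hvertices := injOn_sum_Icc_pow g
  rw [hg] at hvertices
  have hedges := (injOn_sym2_pred_self hvertices).mono (s₁ := Icc 1 (2 * k - 1)) fun i hi => by
    rw [coe_Icc, Set.mem_Icc] at hi
    exact ⟨by omega, by omega⟩
  rw [typeCount_image hedges, ← card_filter_Icc_modEq hr]
  refine congrArg card (filter_congr fun i hi => ?_)
  rw [edgeType_sum_Icc_pow g (mem_Icc.mp hi).1, natAbs_valMinAbs_pow_eq_iff hg hk]

end primitiveRoot

/-- Types of the edges of the primitive-root path `P = (p, g, g+g², …)` in `K_p`: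
the first `k` edges have pairwise distinct types, edge `k+i` repeats the type of
edge `i`, the `k`-th edge is the unique `1`-type edge, and every type in `[2,k]`
appears exactly twice while type `1` appears once. -/
theorem stmt19 (p : ℕ) (hp : p.Prime) (hodd : Odd p) (g : ZMod p)
    (hg : orderOf g = p - 1) :
    ∀ (vtx : ℕ → ZMod p), (vtx = fun m => ∑ j ∈ Finset.Icc 1 m, g ^ j) →
    ∀ (T : ℕ → ℕ), (T = fun i => edgeType p s(vtx (i - 1), vtx i)) →
      (∀ i ∈ Finset.Icc 1 ((p - 1) / 2), ∀ j ∈ Finset.Icc 1 ((p - 1) / 2),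
        i ≠ j → T i ≠ T j) ∧
      (∀ i ∈ Finset.Icc 1 ((p - 1) / 2 - 2), T ((p - 1) / 2 + i) = T i) ∧
      T ((p - 1) / 2) = 1 ∧
      (∀ x ∈ Finset.Icc 2 ((p - 1) / 2),
        typeCount p ((Finset.Icc 1 (p - 2)).image fun i => s(vtx (i - 1), vtx i)) x = 2) ∧
      typeCount p ((Finset.Icc 1 (p - 2)).image fun i => s(vtx (i - 1), vtx i)) 1 = 1 := by
  rintro vtx rfl T rfl
  have := Fact.mk hp
  obtain ⟨k, hpk⟩ := hodd
  have hk : k ≠ 0 := by have := hp.two_le; omega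
  replace hg : orderOf g = 2 * k := by rw [hg, hpk, Nat.add_sub_cancel]
  rw [show (p - 1) / 2 = k by omega, show p - 2 = 2 * k - 1 by omega]
  have hk1 : (g ^ k).valMinAbs.natAbs = 1 := natAbs_valMinAbs_pow_eq_one hg hk
  refine ⟨?_, fun i hi => ?_, ?_, fun x hx => ?_, ?_⟩
  · rintro i hi j hj hij
    rw [mem_Icc] at hi hj
    simp only [edgeType_sum_Icc_pow g hi.1, edgeType_sum_Icc_pow g hj.1]
    exact fun h => hij (injOn_natAbs_valMinAbs_pow hg hk hi hj h)
  · simp only [edgeType_sum_Icc_pow g (mem_Icc.mp hi).1,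
      edgeType_sum_Icc_pow g (show 1 ≤ k + i by omega)]
    rw [add_comm]
    exact periodic_natAbs_valMinAbs_pow hg hk i
  · simpa only [edgeType_sum_Icc_pow g (Nat.one_le_iff_ne_zero.mpr hk)] using hk1
  · obtain ⟨r, hr, rfl⟩ := exists_natAbs_valMinAbs_pow_eq hpk hg hk
      (Icc_subset_Icc_left one_le_two hx)
    have hrk : r ≠ k := by
      rintro rfl
      have := (mem_Icc.mp hx).1
      omega
    simpa [hrk] using typeCount_image_sum_Icc_pow hg hk hr
  · simpa [hk1] using typeCount_image_sum_Icc_pow hg hk (mem_Icc.mpr ⟨by omega, le_rfl⟩)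
end
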